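/- arXiv:1003.1596 — 2 statements merged into one kernel-verified Lean document; each statement's English description precedes it below -/
import Mathlib

section
/- Let I = [a,b] and J be intervals with |I| ≤ |J| and dist(I,J) ≥ |J|, let μ, ν be positive measures, and let f_I ∈ L²(μ) be supported on I with ∫ f_I dμ = 0, g_J ∈ L²(ν) supported on J. Then |∬ f_I(t)·g_J(s)/(t-s) dμ(t) dν(s)| ≤ A·(|I|/(dist(I,J)+|I|+|J|)²)·μ(I)^{1/2}·ν(J)^{1/2}·‖f_I‖_{L²(μ)}·‖g_J‖_{L²(ν)} for an absolute constant A. -/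
open MeasureTheory Set

/-!
Write `G t = ∫_J g(s)/(t-s) dν(s)`, so the double integral is `∫_I f G dμ`. Since `f` has mean
zero, `G` may be replaced by `G - G(a)`. Points of `I` are at distance at least `δ = dist(I,J)`
from `J`, so `G` is `δ⁻² ‖g‖_{L¹(ν)}`-Lipschitz on `I` and `|G - G(a)| ≤ |I| δ⁻² ‖g‖_{L¹}` there.
Cauchy–Schwarz bounds both `L¹` norms by `L²` norms, and `|J| ≤ δ`, `|I| ≤ |J|` give
`δ + |I| + |J| ≤ 3δ`, whence `A = 9`.
-/

/-- Distance between two sets of reals. -/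
noncomputable def setDist (s t : Set ℝ) : ℝ := sInf (Set.image2 dist s t)

theorem setDist_le_dist {s t : Set ℝ} {x y : ℝ} (hx : x ∈ s) (hy : y ∈ t) :
    setDist s t ≤ dist x y :=
  csInf_le ⟨0, by rintro _ ⟨u, -, v, -, rfl⟩; exact dist_nonneg⟩ (mem_image2_of_mem hx hy)

theorem integral_abs_le_sqrt_measureReal_mul_sqrt_integral_sq {α : Type*} [MeasurableSpace α]
    {μ : Measure α} [IsFiniteMeasure μ] {f : α → ℝ} (hf : MemLp f 2 μ) :
    ∫ x, |f x| ∂μ ≤ Real.sqrt (μ univ).toReal * Real.sqrt (∫ x, f x ^ 2 ∂μ) := by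
  have hpq : Real.HolderConjugate 2 2 := by constructor <;> norm_num
  have h2 : ENNReal.ofReal 2 = 2 := by norm_num
  have hfn : MemLp (fun x => |f x|) (ENNReal.ofReal 2) μ := by
    rw [h2]; simpa using hf.norm
  have holder := integral_mul_le_Lp_mul_Lq_of_nonneg hpq (ae_of_all _ fun x => abs_nonneg (f x))
    (ae_of_all _ fun _ => zero_le_one) hfn (memLp_const 1)
  simp only [mul_one, Real.rpow_two, sq_abs, one_pow] at holder
  rwa [integral_const, smul_eq_mul, mul_one, ← Real.sqrt_eq_rpow, ← Real.sqrt_eq_rpow,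
    mul_comm, measureReal_def] at holder

theorem abs_integral_mul_le_of_integral_eq_zero {α : Type*} [MeasurableSpace α]
    {μ : Measure α} {f G : α → ℝ} {c C : ℝ} (hf : Integrable f μ) (hmean : ∫ x, f x ∂μ = 0)
    (hG : AEStronglyMeasurable G μ) (hGc : ∀ᵐ x ∂μ, |G x - c| ≤ C) :
    |∫ x, f x * G x ∂μ| ≤ C * ∫ x, |f x| ∂μ := by
  have hbound : ∀ᵐ x ∂μ, ‖f x * (G x - c)‖ ≤ C * |f x| := by
    filter_upwards [hGc] with x hx
    rw [Real.norm_eq_abs, abs_mul, mul_comm]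
    exact mul_le_mul_of_nonneg_right hx (abs_nonneg _)
  have hint : Integrable (fun x => f x * (G x - c)) μ :=
    (hf.norm.const_mul C).mono' (hf.aestronglyMeasurable.mul (hG.sub aestronglyMeasurable_const))
      hbound
  have hshift : ∫ x, f x * G x ∂μ = ∫ x, f x * (G x - c) ∂μ := by
    calc ∫ x, f x * G x ∂μ = ∫ x, (f x * (G x - c) + c * f x) ∂μ := by congr 1; ext x; ring
      _ = ∫ x, f x * (G x - c) ∂μ := by
        rw [integral_add hint (hf.const_mul c), integral_const_mul, hmean, mul_zero, add_zero]
  calc |∫ x, f x * G x ∂μ| ≤ ∫ x, ‖f x * (G x - c)‖ ∂μ := by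
        rw [hshift, ← Real.norm_eq_abs]; exact norm_integral_le_integral_norm _
    _ ≤ ∫ x, C * |f x| ∂μ := integral_mono_ae hint.norm (hf.norm.const_mul C) hbound
    _ = C * ∫ x, |f x| ∂μ := integral_const_mul _ _

noncomputable def cauchyTransform (ν : Measure ℝ) (g : ℝ → ℝ) (t : ℝ) : ℝ :=
  ∫ s, g s / (t - s) ∂ν

section CauchyTransform

variable {ν : Measure ℝ} {g : ℝ → ℝ} {δ t t' : ℝ}

theorem integrable_div_sub_of_le_abs_sub (hg : Integrable g ν) (hδ : 0 < δ)
    (ht : ∀ᵐ s ∂ν, δ ≤ |t - s|) : Integrable (fun s => g s / (t - s)) ν := by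
  refine (hg.norm.const_mul δ⁻¹).mono'
    (hg.aestronglyMeasurable.div₀ (measurable_const.sub measurable_id).aestronglyMeasurable) ?_
  filter_upwards [ht] with s hs
  rw [Real.norm_eq_abs, abs_div, div_eq_mul_inv, mul_comm, Real.norm_eq_abs]
  exact mul_le_mul_of_nonneg_right (inv_anti₀ hδ hs) (abs_nonneg _)

theorem abs_cauchyTransform_sub_le (hg : Integrable g ν) (hδ : 0 < δ)
    (ht : ∀ᵐ s ∂ν, δ ≤ |t - s|) (ht' : ∀ᵐ s ∂ν, δ ≤ |t' - s|) :
    |cauchyTransform ν g t - cauchyTransform ν g t'| ≤ |t - t'| / δ ^ 2 * ∫ s, |g s| ∂ν := by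
  have hbound : ∀ᵐ s ∂ν, ‖g s / (t - s) - g s / (t' - s)‖ ≤ |t - t'| / δ ^ 2 * |g s| := by
    filter_upwards [ht, ht'] with s hs hs'
    have hne : t - s ≠ 0 := abs_pos.mp (hδ.trans_le hs)
    have hne' : t' - s ≠ 0 := abs_pos.mp (hδ.trans_le hs')
    have hkernel : g s / (t - s) - g s / (t' - s) = g s * ((t' - t) / ((t - s) * (t' - s))) := by
      field_simp; ring
    have hprod : δ ^ 2 ≤ |(t - s) * (t' - s)| := by
      rw [abs_mul, sq]; exact mul_le_mul hs hs' hδ.le (abs_nonneg _)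
    rw [hkernel, Real.norm_eq_abs, abs_mul, abs_div, abs_sub_comm t' t, mul_comm]
    gcongr
  have hint := integrable_div_sub_of_le_abs_sub hg hδ ht
  have hint' := integrable_div_sub_of_le_abs_sub hg hδ ht'
  rw [cauchyTransform, cauchyTransform, ← integral_sub hint hint', ← integral_const_mul]
  exact (norm_integral_le_integral_norm _).trans
    (integral_mono_ae (hint.sub hint').norm (hg.norm.const_mul _) hbound)

theorem abs_setIntegral_mul_cauchyTransform_le {μ : Measure ℝ} {f : ℝ → ℝ} {a b : ℝ}
    (hab : a ≤ b) (hδ : 0 < δ) (hsep : ∀ t ∈ Icc a b, ∀ᵐ s ∂ν, δ ≤ |t - s|)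
    (hf : IntegrableOn f (Icc a b) μ) (hmean : ∫ t in Icc a b, f t ∂μ = 0)
    (hg : Integrable g ν) :
    |∫ t in Icc a b, f t * cauchyTransform ν g t ∂μ| ≤
      (b - a) / δ ^ 2 * (∫ s, |g s| ∂ν) * ∫ t in Icc a b, |f t| ∂μ := by
  have hlip : ∀ t ∈ Icc a b, ∀ t' ∈ Icc a b,
      dist (cauchyTransform ν g t) (cauchyTransform ν g t') ≤
        (∫ s, |g s| ∂ν) / δ ^ 2 * dist t t' := fun t ht t' ht' => by
    rw [Real.dist_eq, Real.dist_eq, div_mul_comm]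
    exact abs_cauchyTransform_sub_le hg hδ (hsep t ht) (hsep t' ht')
  have hcont : ContinuousOn (cauchyTransform ν g) (Icc a b) :=
    (LipschitzOnWith.of_dist_le' hlip).continuousOn
  refine abs_integral_mul_le_of_integral_eq_zero hf hmean
    (hcont.aestronglyMeasurable measurableSet_Icc) (c := cauchyTransform ν g a) ?_
  refine ae_restrict_of_forall_mem measurableSet_Icc fun t ht => ?_
  have hta : |t - a| ≤ b - a := by rw [abs_of_nonneg (by linarith [ht.1])]; linarith [ht.2]
  calc |cauchyTransform ν g t - cauchyTransform ν g a|
      ≤ |t - a| / δ ^ 2 * ∫ s, |g s| ∂ν :=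
        abs_cauchyTransform_sub_le hg hδ (hsep t ht) (hsep a (left_mem_Icc.mpr hab))
    _ ≤ (b - a) / δ ^ 2 * ∫ s, |g s| ∂ν := by
        gcongr

end CauchyTransform

theorem div_sq_le_nine_mul_div_sq {ℓ m δ : ℝ} (hℓ : 0 ≤ ℓ) (hm : 0 ≤ m) (hδ : 0 < δ)
    (hℓδ : ℓ ≤ δ) (hmδ : m ≤ δ) : ℓ / δ ^ 2 ≤ 9 * (ℓ / (δ + ℓ + m) ^ 2) := by
  calc ℓ / δ ^ 2 = 9 * (ℓ / (3 * δ) ^ 2) := by field_simp; ring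
    _ ≤ 9 * (ℓ / (δ + ℓ + m) ^ 2) := by gcongr; linarith

/-- Long range interaction estimate: if I = [a,b], J = [c,d] with |I| ≤ |J| and
dist(I,J) ≥ |J|, f is supported on I with μ-mean zero, g is supported on J, then
|∬ f(t)g(s)/(t-s) dμ(t)dν(s)| ≤ A · |I|/(dist(I,J)+|I|+|J|)² · μ(I)^{1/2} ν(J)^{1/2}
· ‖f‖_{L²(μ)} ‖g‖_{L²(ν)} for an absolute constant A. -/
theorem long_range_interaction :
    ∃ A : ℝ, 0 < A ∧
    ∀ (μ ν : Measure ℝ) (a b c d : ℝ) (f g : ℝ → ℝ),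
      a < b → c < d →
      b - a ≤ d - c →
      d - c ≤ setDist (Set.Icc a b) (Set.Icc c d) →
      Disjoint (Set.Icc a b) (Set.Icc c d) →
      μ (Set.Icc a b) < ⊤ → ν (Set.Icc c d) < ⊤ →
      (∀ t ∉ Set.Icc a b, f t = 0) → (∀ s ∉ Set.Icc c d, g s = 0) →
      MemLp f 2 μ → MemLp g 2 ν →
      (∫ t in Set.Icc a b, f t ∂μ) = 0 →
      |∫ t in Set.Icc a b, (∫ s in Set.Icc c d, f t * g s / (t - s) ∂ν) ∂μ| ≤
        A * ((b - a) / (setDist (Set.Icc a b) (Set.Icc c d) + (b - a) + (d - c)) ^ 2) *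
          Real.sqrt (μ (Set.Icc a b)).toReal * Real.sqrt (ν (Set.Icc c d)).toReal *
          Real.sqrt (∫ t in Set.Icc a b, (f t) ^ 2 ∂μ) *
          Real.sqrt (∫ s in Set.Icc c d, (g s) ^ 2 ∂ν) := by
  refine ⟨9, by norm_num, ?_⟩
  intro μ ν a b c d f g hab hcd hIJ hJδ _ hμ hν _ _ hf hg hmean
  set δ := setDist (Icc a b) (Icc c d)
  have : IsFiniteMeasure (μ.restrict (Icc a b)) := ⟨by rwa [Measure.restrict_apply_univ]⟩
  have : IsFiniteMeasure (ν.restrict (Icc c d)) := ⟨by rwa [Measure.restrict_apply_univ]⟩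
  have hinner : ∀ t, ∫ s in Icc c d, f t * g s / (t - s) ∂ν =
      f t * cauchyTransform (ν.restrict (Icc c d)) g t := fun t => by
    simp_rw [mul_div_assoc]; exact integral_const_mul _ _
  have hsep : ∀ t ∈ Icc a b, ∀ᵐ s ∂ν.restrict (Icc c d), δ ≤ |t - s| := fun t ht =>
    ae_restrict_of_forall_mem measurableSet_Icc fun s hs => setDist_le_dist ht hs
  have hmain := abs_setIntegral_mul_cauchyTransform_le hab.le (by linarith) hsep
    ((hf.restrict _).integrable one_le_two) hmean ((hg.restrict _).integrable one_le_two)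
  have hf₂ := integral_abs_le_sqrt_measureReal_mul_sqrt_integral_sq (hf.restrict (Icc a b))
  have hg₂ := integral_abs_le_sqrt_measureReal_mul_sqrt_integral_sq (hg.restrict (Icc c d))
  rw [Measure.restrict_apply_univ] at hf₂ hg₂
  have hconst := div_sq_le_nine_mul_div_sq (by linarith) (by linarith) (by linarith)
    (hIJ.trans hJδ) hJδ
  simp_rw [hinner]
  refine hmain.trans ?_
  calc (b - a) / δ ^ 2 * (∫ s in Icc c d, |g s| ∂ν) * ∫ t in Icc a b, |f t| ∂μ
      ≤ 9 * ((b - a) / (δ + (b - a) + (d - c)) ^ 2) *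
          (Real.sqrt (ν (Icc c d)).toReal * Real.sqrt (∫ s in Icc c d, g s ^ 2 ∂ν)) *
          (Real.sqrt (μ (Icc a b)).toReal * Real.sqrt (∫ t in Icc a b, f t ^ 2 ∂μ)) := by
        gcongr
    _ = _ := by ring
end

section
/- Let μ, ν be positive measures on ℝ with Q_{μ,ν} < ∞. For r > 0 define I_r φ(s) := (1/(2r)) ∫ χ_{[-r,r]}(s-t) φ(t) dμ(t). Then there is an absolute constant A such that ‖I_r φ‖_{L²(ν)} ≤ A·Q_{μ,ν}^{1/2}·‖φ‖_{L²(μ)} for all φ ∈ L²(μ) and all r > 0. -/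
/-!
By Cauchy–Schwarz, `(∫_{B(s,r)} |φ| dμ)² ≤ μ(B(s,r)) ∫_{B(s,r)} φ² dμ`, and for `t ∈ B(s,r)` the
ball `B(s,r)` lies in `B(t,2r)`. Integrating in `s` against `ν` and exchanging the order of
integration turns the weight into `μ(B(t,2r)) ν(B(t,r)) ≤ μ(B(t,2r)) ν(B(t,2r)) ≤ 16 Q r²`, so
`‖I_r φ‖²_{L²(ν)} ≤ (2r)⁻² · 16 Q r² ‖φ‖²_{L²(μ)} = 4 Q ‖φ‖²_{L²(μ)}`, i.e. `A = 2` works.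
-/

open MeasureTheory Metric Set
open scoped ENNReal

section General

variable {α : Type*} [MeasurableSpace α]

theorem lintegral_sq_le_measure_univ_mul (μ : Measure α)
    {f : α → ℝ≥0∞} (hf : AEMeasurable f μ) :
    (∫⁻ a, f a ∂μ) ^ 2 ≤ μ univ * ∫⁻ a, f a ^ 2 ∂μ := by
  have hpq : Real.HolderConjugate 2 2 := by constructor <;> norm_num
  have h := ENNReal.lintegral_mul_le_Lp_mul_Lq μ hpq hf aemeasurable_const (g := fun _ => 1)
  simp only [Pi.mul_apply, mul_one, ENNReal.one_rpow, lintegral_const, one_mul] at h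
  calc (∫⁻ a, f a ∂μ) ^ 2
      ≤ ((∫⁻ a, f a ^ (2 : ℝ) ∂μ) ^ (1 / (2 : ℝ)) * μ univ ^ (1 / (2 : ℝ))) ^ 2 :=
        pow_le_pow_left' h 2
    _ = μ univ * ∫⁻ a, f a ^ 2 ∂μ := by
        rw [mul_pow, ← ENNReal.rpow_natCast (_ ^ (1 / (2 : ℝ))) 2,
          ← ENNReal.rpow_natCast (μ univ ^ (1 / (2 : ℝ))) 2, ← ENNReal.rpow_mul,
          ← ENNReal.rpow_mul]
        norm_num
        exact mul_comm _ _

theorem ENNReal.ofReal_sq_eq_enorm_sq (x : ℝ) : ENNReal.ofReal (x ^ 2) = ‖x‖ₑ ^ 2 := by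
  rw [Real.enorm_eq_ofReal_abs, ← ENNReal.ofReal_pow (abs_nonneg x), sq_abs]

-- No integrability is needed: the Bochner integral of a non-integrable function is `0`.
theorem integral_sq_le_toReal_lintegral_enorm_sq (μ : Measure α) (f : α → ℝ) :
    ∫ a, f a ^ 2 ∂μ ≤ (∫⁻ a, ‖f a‖ₑ ^ 2 ∂μ).toReal := by
  refine (Real.le_norm_self _).trans ((norm_integral_le_lintegral_norm _).trans_eq ?_)
  simp only [Real.norm_eq_abs, abs_pow, sq_abs, ENNReal.ofReal_sq_eq_enorm_sq]

theorem MeasureTheory.MemLp.lintegral_enorm_sq_eq {μ : Measure α} {f : α → ℝ} (hf : MemLp f 2 μ) :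
    ∫⁻ a, ‖f a‖ₑ ^ 2 ∂μ = ENNReal.ofReal (∫ a, f a ^ 2 ∂μ) := by
  rw [ofReal_integral_eq_lintegral_ofReal hf.integrable_sq
    (Filter.Eventually.of_forall fun a => sq_nonneg (f a))]
  simp only [ENNReal.ofReal_sq_eq_enorm_sq]

end General

section Metric

variable {α : Type*} [PseudoMetricSpace α] [MeasurableSpace α] [OpensMeasurableSpace α]

theorem measurableSet_dist_le [SecondCountableTopology α] (r : ℝ) :
    MeasurableSet {p : α × α | dist p.2 p.1 ≤ r} :=
  measurableSet_le (measurable_snd.dist measurable_fst) measurable_const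

theorem measurable_measure_closedBall [SecondCountableTopology α] (μ : Measure α) [SFinite μ]
    (r : ℝ) : Measurable fun x => μ (closedBall x r) :=
  measurable_measure_prodMk_left (measurableSet_dist_le r)

theorem lintegral_setLIntegral_closedBall_swap [SecondCountableTopology α] (μ ν : Measure α)
    [SFinite μ] [SFinite ν] {f : α → ℝ≥0∞} (hf : AEMeasurable f μ) (r : ℝ) :
    ∫⁻ x, ∫⁻ y in closedBall x r, f y ∂μ ∂ν = ∫⁻ y, ν (closedBall y r) * f y ∂μ := by
  set S := {p : α × α | dist p.2 p.1 ≤ r}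
  calc ∫⁻ x, ∫⁻ y in closedBall x r, f y ∂μ ∂ν
      = ∫⁻ x, ∫⁻ y, S.indicator (fun p => f p.2) (x, y) ∂μ ∂ν := by
        refine lintegral_congr fun x => ?_
        rw [← lintegral_indicator measurableSet_closedBall]
        rfl
    _ = ∫⁻ y, ∫⁻ x, S.indicator (fun p => f p.2) (x, y) ∂ν ∂μ :=
        lintegral_lintegral_swap (hf.comp_snd.indicator (measurableSet_dist_le r))
    _ = ∫⁻ y, ν (closedBall y r) * f y ∂μ := by
        refine lintegral_congr fun y => ?_
        have hS : ∀ x, S.indicator (fun p => f p.2) (x, y)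
            = (closedBall y r).indicator (fun _ => f y) x := by
          intro x
          simp only [S, indicator, mem_ofPred_eq, mem_closedBall, dist_comm]
        simp only [hS, lintegral_indicator_const measurableSet_closedBall, mul_comm]

theorem sq_setLIntegral_closedBall_le (μ : Measure α) {f : α → ℝ≥0∞} (hf : AEMeasurable f μ)
    (x : α) (r : ℝ) :
    (∫⁻ y in closedBall x r, f y ∂μ) ^ 2
      ≤ ∫⁻ y in closedBall x r, μ (closedBall y (2 * r)) * f y ^ 2 ∂μ := by
  calc (∫⁻ y in closedBall x r, f y ∂μ) ^ 2
      ≤ μ (closedBall x r) * ∫⁻ y in closedBall x r, f y ^ 2 ∂μ := by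
        simpa [Measure.restrict_apply_univ] using
          lintegral_sq_le_measure_univ_mul (μ.restrict (closedBall x r)) hf.restrict
    _ ≤ ∫⁻ y in closedBall x r, μ (closedBall x r) * f y ^ 2 ∂μ := lintegral_const_mul_le _ _
    _ ≤ ∫⁻ y in closedBall x r, μ (closedBall y (2 * r)) * f y ^ 2 ∂μ := by
        refine setLIntegral_mono' measurableSet_closedBall fun y hy => ?_
        gcongr
        refine closedBall_subset_closedBall' ?_
        rw [mem_closedBall, dist_comm] at hy
        linarith

theorem lintegral_sq_setLIntegral_closedBall_le [SecondCountableTopology α]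
    (μ ν : Measure α) [SFinite μ] [SFinite ν] {f : α → ℝ≥0∞} (hf : AEMeasurable f μ)
    {r : ℝ} (hr : 0 ≤ r) :
    ∫⁻ x, (∫⁻ y in closedBall x r, f y ∂μ) ^ 2 ∂ν
      ≤ ∫⁻ y, μ (closedBall y (2 * r)) * ν (closedBall y (2 * r)) * f y ^ 2 ∂μ := by
  calc ∫⁻ x, (∫⁻ y in closedBall x r, f y ∂μ) ^ 2 ∂ν
      ≤ ∫⁻ x, ∫⁻ y in closedBall x r, μ (closedBall y (2 * r)) * f y ^ 2 ∂μ ∂ν :=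
        lintegral_mono fun x => sq_setLIntegral_closedBall_le μ hf x r
    _ = ∫⁻ y, ν (closedBall y r) * (μ (closedBall y (2 * r)) * f y ^ 2) ∂μ :=
        lintegral_setLIntegral_closedBall_swap μ ν
          ((measurable_measure_closedBall μ _).aemeasurable.mul (hf.pow_const 2)) r
    _ ≤ ∫⁻ y, μ (closedBall y (2 * r)) * ν (closedBall y (2 * r)) * f y ^ 2 ∂μ := by
        refine lintegral_mono fun y => ?_
        rw [mul_left_comm, ← mul_assoc]
        gcongr
        linarith

end Metric

theorem measure_Icc_mul_measure_Icc_le {μ ν : Measure ℝ} [IsLocallyFiniteMeasure μ]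
    [IsLocallyFiniteMeasure ν] {Q a b : ℝ} (hab : a < b)
    (hQ : (μ (Icc a b)).toReal / (b - a) * ((ν (Icc a b)).toReal / (b - a)) ≤ Q) :
    μ (Icc a b) * ν (Icc a b) ≤ ENNReal.ofReal (Q * (b - a) ^ 2) := by
  have hba : 0 < b - a := sub_pos.2 hab
  rw [← ENNReal.ofReal_toReal (measure_Icc_lt_top (μ := μ)).ne,
    ← ENNReal.ofReal_toReal (measure_Icc_lt_top (μ := ν)).ne,
    ← ENNReal.ofReal_mul ENNReal.toReal_nonneg]
  refine ENNReal.ofReal_le_ofReal ?_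
  calc (μ (Icc a b)).toReal * (ν (Icc a b)).toReal
      = (μ (Icc a b)).toReal / (b - a) * ((ν (Icc a b)).toReal / (b - a)) * (b - a) ^ 2 := by
        field_simp
    _ ≤ Q * (b - a) ^ 2 := by gcongr

/-- The operator `I_r` of the paper. -/
noncomputable def convolutionAverage (μ : Measure ℝ) (r : ℝ) (φ : ℝ → ℝ) (s : ℝ) : ℝ :=
  (1 / (2 * r)) * ∫ t in Icc (s - r) (s + r), φ t ∂μ

theorem lintegral_enorm_convolutionAverage_sq_le {μ ν : Measure ℝ} [IsLocallyFiniteMeasure μ]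
    [IsLocallyFiniteMeasure ν] {Q : ℝ}
    (hQ : ∀ a b : ℝ, a < b →
      (μ (Icc a b)).toReal / (b - a) * ((ν (Icc a b)).toReal / (b - a)) ≤ Q)
    {r : ℝ} (hr : 0 < r) {φ : ℝ → ℝ} (hφ : AEStronglyMeasurable φ μ) :
    ∫⁻ s, ‖convolutionAverage μ r φ s‖ₑ ^ 2 ∂ν
      ≤ ENNReal.ofReal (4 * Q) * ∫⁻ t, ‖φ t‖ₑ ^ 2 ∂μ := by
  set c := ENNReal.ofReal (1 / (2 * r))
  have hc : 0 ≤ 1 / (2 * r) := by positivity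
  have hpointwise : ∀ s, ‖convolutionAverage μ r φ s‖ₑ ^ 2
      ≤ c ^ 2 * (∫⁻ t in closedBall s r, ‖φ t‖ₑ ∂μ) ^ 2 := by
    intro s
    rw [convolutionAverage, ← Real.closedBall_eq_Icc, enorm_mul, Real.enorm_eq_ofReal hc,
      ← mul_pow]
    gcongr
    exact enorm_integral_le_lintegral_enorm _
  have hweight : ∀ t, μ (closedBall t (2 * r)) * ν (closedBall t (2 * r))
      ≤ ENNReal.ofReal (16 * Q * r ^ 2) := by
    intro t
    rw [Real.closedBall_eq_Icc]
    have hlt : t - 2 * r < t + 2 * r := by linarith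
    convert measure_Icc_mul_measure_Icc_le hlt (hQ _ _ hlt) using 2
    ring
  calc ∫⁻ s, ‖convolutionAverage μ r φ s‖ₑ ^ 2 ∂ν
      ≤ ∫⁻ s, c ^ 2 * (∫⁻ t in closedBall s r, ‖φ t‖ₑ ∂μ) ^ 2 ∂ν := lintegral_mono hpointwise
    _ = c ^ 2 * ∫⁻ s, (∫⁻ t in closedBall s r, ‖φ t‖ₑ ∂μ) ^ 2 ∂ν :=
        lintegral_const_mul' _ _ (ENNReal.pow_ne_top ENNReal.ofReal_ne_top)
    _ ≤ c ^ 2 * ∫⁻ t, μ (closedBall t (2 * r)) * ν (closedBall t (2 * r)) * ‖φ t‖ₑ ^ 2 ∂μ := by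
        gcongr c ^ 2 * ?_
        exact lintegral_sq_setLIntegral_closedBall_le μ ν hφ.enorm hr.le
    _ ≤ c ^ 2 * ∫⁻ t, ENNReal.ofReal (16 * Q * r ^ 2) * ‖φ t‖ₑ ^ 2 ∂μ := by
        gcongr with t
        exact hweight t
    _ = ENNReal.ofReal (4 * Q) * ∫⁻ t, ‖φ t‖ₑ ^ 2 ∂μ := by
        rw [lintegral_const_mul' _ _ ENNReal.ofReal_ne_top, ← mul_assoc, ← ENNReal.ofReal_pow hc,
          ← ENNReal.ofReal_mul (by positivity)]
        congr 2
        field_simp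
        ring

/-- Two-weight bound for the normalized convolution averages
I_r φ(s) = (1/(2r)) ∫_{[s-r,s+r]} φ dμ: there is an absolute constant A such that
whenever Q_{μ,ν} = sup_I (μ(I)/|I|)(ν(I)/|I|) ≤ Q one has
‖I_r φ‖_{L²(ν)} ≤ A Q^{1/2} ‖φ‖_{L²(μ)} for all r > 0. -/
theorem convolution_averaging_two_weight :
    ∃ A : ℝ, 0 < A ∧
    ∀ (μ ν : Measure ℝ), IsLocallyFiniteMeasure μ → IsLocallyFiniteMeasure ν →
    ∀ (Q : ℝ), 0 ≤ Q →
    (∀ a b : ℝ, a < b →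
      ((μ (Set.Icc a b)).toReal / (b - a)) * ((ν (Set.Icc a b)).toReal / (b - a)) ≤ Q) →
    ∀ (r : ℝ), 0 < r →
    ∀ (φ : ℝ → ℝ), MemLp φ 2 μ →
      Real.sqrt (∫ s, ((1 / (2 * r)) * ∫ t in Set.Icc (s - r) (s + r), φ t ∂μ) ^ 2 ∂ν) ≤
        A * Real.sqrt Q * Real.sqrt (∫ t, (φ t) ^ 2 ∂μ) := by
  refine ⟨2, two_pos, fun μ ν _ _ Q hQ hQμν r hr φ hφ => ?_⟩
  have hsq : ∫ s, convolutionAverage μ r φ s ^ 2 ∂ν ≤ 4 * Q * ∫ t, φ t ^ 2 ∂μ := calc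
    _ ≤ (∫⁻ s, ‖convolutionAverage μ r φ s‖ₑ ^ 2 ∂ν).toReal :=
        integral_sq_le_toReal_lintegral_enorm_sq ν _
    _ ≤ (ENNReal.ofReal (4 * Q) * ∫⁻ t, ‖φ t‖ₑ ^ 2 ∂μ).toReal := by
        refine ENNReal.toReal_mono ?_ (lintegral_enorm_convolutionAverage_sq_le hQμν hr hφ.1)
        rw [hφ.lintegral_enorm_sq_eq]
        exact ENNReal.mul_ne_top ENNReal.ofReal_ne_top ENNReal.ofReal_ne_top
    _ = 4 * Q * ∫ t, φ t ^ 2 ∂μ := by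
        rw [hφ.lintegral_enorm_sq_eq, ← ENNReal.ofReal_mul (by positivity),
          ENNReal.toReal_ofReal (by positivity)]
  calc _ ≤ Real.sqrt (4 * Q * ∫ t, φ t ^ 2 ∂μ) := Real.sqrt_le_sqrt hsq
    _ = 2 * Real.sqrt Q * Real.sqrt (∫ t, φ t ^ 2 ∂μ) := by
        rw [Real.sqrt_mul (by positivity), Real.sqrt_mul (by positivity),
          show (4 : ℝ) = 2 ^ 2 by norm_num, Real.sqrt_sq zero_le_two]
end
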